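/- arXiv:2206.08154 — 3 statements merged into one kernel-verified Lean document; each statement's English description precedes it below -/
import Mathlib

section
/- Let A be a commutative unital C*-algebra, let a, b ∈ A, define P(z) = (z - a)(z - b) and P'(z) = 2z - (a + b) for z ∈ A, and let c = (a + b)/2. Then for every z ∈ A, (P(z) - P(c))(P(z) - P(c))* ≤ ((2-1)/2)² · (z - c) P'(z) P'(z)* (z - c)*, i.e. (P(z) - P(c))(P(z) - P(c))* ≤ (1/4) · (z - c) P'(z) P'(z)* (z - c)* in the order of self-adjoint elements of A. In particular the strong form of the C*-algebraic Smale mean value conjecture holds for degree 2 polynomials, with w = c the critical point. -/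
/-!
Since `c` is the midpoint of the roots, `P z - P c = (z - c)²` and `P' z = 2 (z - c)`. By
commutativity both sides of the inequality equal `(z - c)² ((z - c)²)*`, so it holds with equality.
-/

theorem two_mul_eq_add_of_eq_half_smul {K A : Type*} [Field K] [NeZero (2 : K)] [Ring A]
    [Algebra K A] {a b c : A} (hc : c = (1 / 2 : K) • (a + b)) : 2 * c = a + b := by
  rw [hc, two_mul, ← two_smul K, smul_smul, mul_one_div_cancel two_ne_zero, one_smul]

theorem sub_mul_sub_sub_sub_mul_sub_of_two_mul_eq_add {R : Type*} [CommRing R] {a b c : R}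
    (h : 2 * c = a + b) (z : R) :
    (z - a) * (z - b) - (c - a) * (c - b) = (z - c) * (z - c) := by
  linear_combination (z - c) * h

theorem mul_two_mul_mul_star_two_mul_mul_star {A : Type*} [CommRing A] [StarRing A]
    [Algebra ℝ A] (w : A) :
    w * (2 * w) * star (2 * w) * star w = (4 : ℝ) • (w * w * star (w * w)) := by
  rw [Algebra.smul_def, map_ofNat, star_mul, star_mul, star_ofNat]
  ring

theorem degree_two_strong_smale_general {A : Type*} [NormedCommRing A] [StarRing A]
    [NormedAlgebra ℂ A] [PartialOrder A]
    (a b : A) (P P' : A → A)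
    (hP : ∀ z, P z = (z - a) * (z - b))
    (hP' : ∀ z, P' z = 2 * z - (a + b))
    (c : A) (hc : c = (1 / 2 : ℂ) • (a + b)) (z : A) :
    (P z - P c) * star (P z - P c)
      ≤ (((2 - 1) / 2 : ℝ) ^ 2) • ((z - c) * P' z * star (P' z) * star (z - c)) := by
  have hmid : 2 * c = a + b := two_mul_eq_add_of_eq_half_smul hc
  have hdiff : P z - P c = (z - c) * (z - c) := by
    rw [hP, hP]
    exact sub_mul_sub_sub_sub_mul_sub_of_two_mul_eq_add hmid z
  have hderiv : P' z = 2 * (z - c) := by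
    rw [hP', ← hmid]
    ring
  refine le_of_eq ?_
  rw [hdiff, hderiv, mul_two_mul_mul_star_two_mul_mul_star, smul_smul]
  norm_num

/-- **Strong C*-algebraic Smale mean value conjecture in degree 2.**
For `P(z) = (z-a)(z-b)` over a commutative unital C*-algebra, with derivative
`P'(z) = 2z - (a+b)` and critical point `c = (a+b)/2`, one has
`(P(z)-P(c))(P(z)-P(c))* ≤ ((2-1)/2)² (z-c) P'(z) P'(z)* (z-c)*` for every `z`. -/
theorem degree_two_strong_smale {A : Type*} [NormedCommRing A] [StarRing A]
    [CStarRing A] [CompleteSpace A] [NormedAlgebra ℂ A] [StarModule ℂ A]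
    [PartialOrder A] [StarOrderedRing A]
    (a b : A) (P P' : A → A)
    (hP : ∀ z, P z = (z - a) * (z - b))
    (hP' : ∀ z, P' z = 2 * z - (a + b))
    (c : A) (hc : c = (1 / 2 : ℂ) • (a + b)) (z : A) :
    (P z - P c) * star (P z - P c)
      ≤ (((2 - 1) / 2 : ℝ) ^ 2) • ((z - c) * P' z * star (P' z) * star (z - c)) :=
  degree_two_strong_smale_general a b P P' hP hP' c hc z
end

section
/- Let A be a commutative unital C*-algebra, let a, b ∈ A, define P(z) = (z - a)(z - b) and P'(z) = 2z - (a + b) for z ∈ A, and let c = (a + b)/2. Then for every z ∈ A, ‖P(z) - P(c)‖ ≤ (1/2) · ‖z - c‖ · ‖P'(z)‖. Equivalently, if z is not a critical point of P (i.e. P'(z) ≠ 0, so z ≠ c), then ‖P(z) - P(c)‖ / ‖z - c‖ ≤ ((2-1)/2) · ‖P'(z)‖; hence the C*-algebraic Smale mean value conjecture holds for degree 2 polynomials with the conjectured constant (deg P - 1)/deg P = 1/2. -/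
/-! At the critical point `c` of `P`, `P z - P c = (z - c) ^ 2` and `P' z = 2 (z - c)`,
so the bound is just submultiplicativity of the norm: `‖(z - c) ^ 2‖ ≤ ‖z - c‖ ^ 2`. -/

theorem sub_mul_sub_sub_sub_mul_sub_of_add_eq {R : Type*} [CommRing R] {a b c : R}
    (hc : a + b = c + c) (z : R) :
    (z - a) * (z - b) - (c - a) * (c - b) = (z - c) * (z - c) := by
  linear_combination (c - z) * hc

theorem norm_two_mul {𝕜 A : Type*} [RCLike 𝕜] [NormedRing A] [NormedAlgebra 𝕜 A] (x : A) :
    ‖2 * x‖ = 2 * ‖x‖ := by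
  rw [two_mul, ← two_smul 𝕜, norm_smul, RCLike.norm_ofNat]

theorem norm_sub_mul_sub_sub_critical_le {𝕜 A : Type*} [RCLike 𝕜] [NormedCommRing A]
    [NormedAlgebra 𝕜 A] {a b c : A} (hc : a + b = c + c) (z : A) :
    ‖(z - a) * (z - b) - (c - a) * (c - b)‖ ≤ 1 / 2 * ‖z - c‖ * ‖2 * z - (a + b)‖ :=
  calc ‖(z - a) * (z - b) - (c - a) * (c - b)‖ = ‖(z - c) * (z - c)‖ := by
        rw [sub_mul_sub_sub_sub_mul_sub_of_add_eq hc]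
    _ ≤ ‖z - c‖ * ‖z - c‖ := norm_mul_le _ _
    _ = 1 / 2 * ‖z - c‖ * ‖2 * (z - c)‖ := by rw [norm_two_mul (𝕜 := 𝕜)]; ring
    _ = 1 / 2 * ‖z - c‖ * ‖2 * z - (a + b)‖ := by rw [hc, mul_sub, two_mul c]

theorem degree_two_smale_general {A : Type*} [NormedCommRing A] [NormedAlgebra ℂ A]
    (a b : A) (P P' : A → A)
    (hP : ∀ z, P z = (z - a) * (z - b))
    (hP' : ∀ z, P' z = 2 * z - (a + b))
    (c : A) (hc : c = (1 / 2 : ℂ) • (a + b)) (z : A) :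
    ‖P z - P c‖ ≤ (1 / 2) * ‖z - c‖ * ‖P' z‖
    ∧ (P' z ≠ 0 → ‖P z - P c‖ / ‖z - c‖ ≤ ((2 - 1) / 2 : ℝ) * ‖P' z‖) := by
  have hab : a + b = c + c := by
    rw [hc, ← add_smul]
    norm_num
  have hle : ‖P z - P c‖ ≤ 1 / 2 * ‖z - c‖ * ‖P' z‖ := by
    simpa only [hP, hP'] using norm_sub_mul_sub_sub_critical_le (𝕜 := ℂ) hab z
  refine ⟨hle, fun _ => div_le_of_le_mul₀ (norm_nonneg _) (by positivity) ?_⟩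
  linarith

/-- **C*-algebraic Smale mean value conjecture in degree 2.**
For `P(z) = (z-a)(z-b)` over a commutative unital C*-algebra, with derivative
`P'(z) = 2z - (a+b)` and critical point `c = (a+b)/2`, one has
`‖P(z)-P(c)‖ ≤ (1/2) ‖z-c‖ ‖P'(z)‖` for every `z`; equivalently, whenever `z` is not a
critical point of `P`, `‖P(z)-P(c)‖/‖z-c‖ ≤ ((2-1)/2) ‖P'(z)‖`. -/
theorem degree_two_smale {A : Type*} [NormedCommRing A] [StarRing A]
    [CStarRing A] [CompleteSpace A] [NormedAlgebra ℂ A] [StarModule ℂ A]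
    (a b : A) (P P' : A → A)
    (hP : ∀ z, P z = (z - a) * (z - b))
    (hP' : ∀ z, P' z = 2 * z - (a + b))
    (c : A) (hc : c = (1 / 2 : ℂ) • (a + b)) (z : A) :
    ‖P z - P c‖ ≤ (1 / 2) * ‖z - c‖ * ‖P' z‖
    ∧ (P' z ≠ 0 → ‖P z - P c‖ / ‖z - c‖ ≤ ((2 - 1) / 2 : ℝ) * ‖P' z‖) :=
  degree_two_smale_general a b P P' hP hP' c hc z
end

section
/- Let A be a commutative unital C*-algebra, let a, b ∈ A, define P(z) = (z - a)(z - b) and P'(z) = 2z - (a + b) for z ∈ A, and let c = (a + b)/2. Then for every z ∈ A, (1/2) · ‖z - c‖ · ‖P'(z)‖ ≤ ‖P(z) - P(c)‖. Equivalently, if z is not a critical point of P (i.e. P'(z) ≠ 0, so z ≠ c), then ‖P'(z)‖ / 2 ≤ ‖P(z) - P(c)‖ / ‖z - c‖; hence the C*-algebraic Dubinin–Sugawa dual mean value conjecture holds for degree 2 polynomials. -/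
/-- In a commutative C*-algebra, `‖x*x‖ = ‖x‖*‖x‖`. -/
lemma norm_mul_self_comm_cstar {A : Type*} [NormedCommRing A] [StarRing A]
    [CStarRing A] (x : A) : ‖x * x‖ = ‖x‖ * ‖x‖ := by
  have key : ‖x * x‖ * ‖x * x‖ = (‖x‖ * ‖x‖) * (‖x‖ * ‖x‖) := by
    rw [← CStarRing.norm_star_mul_self (x := x * x), ← CStarRing.norm_star_mul_self (x := x)]
    rw [show star (x * x) * (x * x) = star (star x * x) * (star x * x) by
      simp only [star_mul, star_star]; ring, CStarRing.norm_star_mul_self]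
  exact (mul_self_inj (norm_nonneg _) (mul_nonneg (norm_nonneg _) (norm_nonneg _))).mp key

/-- **C*-algebraic Dubinin–Sugawa dual mean value conjecture in degree 2.**
For `P(z) = (z-a)(z-b)` over a commutative unital C*-algebra, with derivative
`P'(z) = 2z - (a+b)` and critical point `c = (a+b)/2`, one has
`(1/2) ‖z-c‖ ‖P'(z)‖ ≤ ‖P(z)-P(c)‖` for every `z`; equivalently, whenever `z` is not a
critical point of `P`, `‖P'(z)‖/2 ≤ ‖P(z)-P(c)‖/‖z-c‖`. -/
theorem degree_two_dubinin_sugawa {A : Type*} [NormedCommRing A] [StarRing A]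
    [CStarRing A] [CompleteSpace A] [NormedAlgebra ℂ A] [StarModule ℂ A]
    (a b : A) (P P' : A → A)
    (hP : ∀ z, P z = (z - a) * (z - b))
    (hP' : ∀ z, P' z = 2 * z - (a + b))
    (c : A) (hc : c = (1 / 2 : ℂ) • (a + b)) (z : A) :
    (1 / 2) * ‖z - c‖ * ‖P' z‖ ≤ ‖P z - P c‖
    ∧ (P' z ≠ 0 → ‖P' z‖ / 2 ≤ ‖P z - P c‖ / ‖z - c‖) := by
  have h2s : ∀ x : A, (2 : ℂ) • x = 2 * x := fun x => by
    rw [Algebra.smul_def, map_ofNat]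
  have hab : a + b = 2 * c := by
    rw [hc, ← h2s, smul_smul]
    norm_num
  have h2 : a + b = c + c := by rw [hab]; ring
  have hPdiff : P z - P c = (z - c) * (z - c) := by
    rw [hP z, hP c]
    linear_combination (c - z) * h2
  have hPd : P' z = 2 * (z - c) := by rw [hP' z, hab]; ring
  have hnormPd : ‖P' z‖ = 2 * ‖z - c‖ := by
    rw [hPd, ← h2s, norm_smul]
    simp
  have hnormPdiff : ‖P z - P c‖ = ‖z - c‖ * ‖z - c‖ := by
    rw [hPdiff, norm_mul_self_comm_cstar]
  constructor
  · rw [hnormPd, hnormPdiff]; ring_nf; rfl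
  · intro hne
    have hzc : z ≠ c := by
      intro h; apply hne; rw [hPd, h]; ring
    have hpos : 0 < ‖z - c‖ := by
      rw [norm_pos_iff]; exact sub_ne_zero_of_ne hzc
    rw [hnormPd, hnormPdiff]
    rw [mul_div_assoc, mul_div_cancel_left₀ _ hpos.ne']
    field_simp
    exact le_rfl
end
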